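/- arXiv:1907.02152 — 7 statements merged into one kernel-verified Lean document; each statement's English description precedes it below -/
import Mathlib

section
/- For every M > 0 there exists δ > 0 such that every ρ in the open probability simplex Δ° with min_{i∈V} ρ_i < δ satisfies I(ρ) > M. Equivalently, the discrete Fisher information I(ρ) tends to +∞ as min_{i∈V} ρ_i → 0 among ρ ∈ Δ°. -/
/-- The discrete Fisher information on a graph:
`I(ρ) = Σ_{{i,j} ∈ E} (log ρ_i − log ρ_j)² (ρ_i + ρ_j)/2`,
where the sum runs over the edges of the graph, each unordered edge counted once. -/
noncomputable def discreteFisher {V : Type*} [Fintype V] [DecidableEq V]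
    (G : SimpleGraph V) [DecidableRel G.Adj] (ρ : V → ℝ) : ℝ :=
  ∑ e ∈ G.edgeFinset,
    Sym2.lift ⟨fun i j => (Real.log (ρ i) - Real.log (ρ j)) ^ 2 * (ρ i + ρ j) / 2,
      fun i j => by ring⟩ e

/-- For every `M > 0` there exists `δ > 0` such that every `ρ` in the open probability
simplex with `min_i ρ_i < δ` satisfies `I(ρ) > M`: the discrete Fisher information blows
up at the boundary of the simplex (for a connected graph). -/
theorem fisher_blowup_at_boundary {V : Type*} [Fintype V] [DecidableEq V] [Nonempty V]
    (G : SimpleGraph V) [DecidableRel G.Adj] (hG : G.Connected)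
    (M : ℝ) (hM : 0 < M) :
    ∃ δ > 0, ∀ ρ : V → ℝ, (∀ i, 0 < ρ i) → (∑ i, ρ i = 1) →
      Finset.univ.inf' Finset.univ_nonempty ρ < δ → M < discreteFisher G ρ := by
  classical
  set n := Fintype.card V with hn
  have hn0 : 0 < n := Fintype.card_pos
  set g : ℝ → ℝ := fun β => β * Real.exp (-Real.sqrt (2 * M / β)) with hgdef
  have hg_le : ∀ x : ℝ, g x ≤ x := by
    intro x
    rcases le_or_gt x 0 with hx | hx
    · have h1 : 2 * M / x ≤ 0 := div_nonpos_iff.2 (Or.inl ⟨by linarith, hx⟩)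
      have h2 : Real.sqrt (2 * M / x) = 0 := Real.sqrt_eq_zero'.2 h1
      simp [hgdef, h2]
    · have h1 : Real.exp (-Real.sqrt (2 * M / x)) ≤ 1 := by
        rw [Real.exp_le_one_iff]
        simp [Real.sqrt_nonneg]
      calc g x = x * Real.exp (-Real.sqrt (2 * M / x)) := rfl
        _ ≤ x * 1 := by nlinarith
        _ = x := mul_one x
  have hg_pos : ∀ x : ℝ, 0 < x → 0 < g x := fun x hx => mul_pos hx (Real.exp_pos _)
  have hg_mono : Monotone g := by
    intro x y hxy
    rcases le_or_gt x 0 with hx | hx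
    · have h1 : 2 * M / x ≤ 0 := div_nonpos_iff.2 (Or.inl ⟨by linarith, hx⟩)
      have h2 : Real.sqrt (2 * M / x) = 0 := Real.sqrt_eq_zero'.2 h1
      have hgx : g x = x := by simp [hgdef, h2]
      rcases le_or_gt y 0 with hy | hy
      · have h1' : 2 * M / y ≤ 0 := div_nonpos_iff.2 (Or.inl ⟨by linarith, hy⟩)
        have h2' : Real.sqrt (2 * M / y) = 0 := Real.sqrt_eq_zero'.2 h1'
        have hgy : g y = y := by simp [hgdef, h2']
        rw [hgx, hgy]; exact hxy
      · rw [hgx]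
        exact le_of_lt (lt_of_le_of_lt hx (hg_pos y hy))
    · have hy : 0 < y := lt_of_lt_of_le hx hxy
      have h1 : 2 * M / y ≤ 2 * M / x := by
        apply div_le_div_of_nonneg_left (by linarith) hx hxy
      have h2 : Real.exp (-Real.sqrt (2 * M / x)) ≤ Real.exp (-Real.sqrt (2 * M / y)) :=
        Real.exp_le_exp.2 (neg_le_neg (Real.sqrt_le_sqrt h1))
      exact mul_le_mul hxy h2 (le_of_lt (Real.exp_pos _)) (le_of_lt hy)
  have hiter_pos : ∀ (k : ℕ) (x : ℝ), 0 < x → 0 < g^[k] x := by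
    intro k
    induction k with
    | zero => intro x hx; simpa using hx
    | succ k ih =>
      intro x hx
      rw [Function.iterate_succ_apply]
      exact ih _ (hg_pos x hx)
  have hiter_anti : ∀ x : ℝ, Antitone (fun k => g^[k] x) := by
    intro x
    apply antitone_nat_of_succ_le
    intro k
    rw [Function.iterate_succ_apply]
    exact (hg_mono.iterate k) (hg_le x)
  have hninv : (0:ℝ) < (n:ℝ)⁻¹ := by positivity
  refine ⟨g^[n] ((n:ℝ)⁻¹), hiter_pos n _ hninv, ?_⟩
  intro ρ hpos hsum hmin
  by_contra hcon
  push_neg at hcon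
  -- every edge term is ≤ M
  have hF0 : ∀ e ∈ G.edgeFinset, 0 ≤ Sym2.lift ⟨fun i j => (Real.log (ρ i) - Real.log (ρ j)) ^ 2 * (ρ i + ρ j) / 2, fun i j => by ring⟩ e := by
    intro e _
    refine Sym2.ind (fun i j => ?_) e
    rw [Sym2.lift_mk]
    have hi := (hpos i).le
    have hj := (hpos j).le
    have := sq_nonneg (Real.log (ρ i) - Real.log (ρ j))
    positivity
  have hterm : ∀ u v : V, G.Adj u v →
      (Real.log (ρ u) - Real.log (ρ v)) ^ 2 * (ρ u + ρ v) / 2 ≤ M := by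
    intro u v huv
    have hmem : s(u, v) ∈ G.edgeFinset := by
      rw [SimpleGraph.mem_edgeFinset, SimpleGraph.mem_edgeSet]; exact huv
    have h1 := Finset.single_le_sum hF0 hmem
    rw [Sym2.lift_mk] at h1
    exact h1.trans hcon
  -- single step estimate
  have hstep : ∀ u v : V, G.Adj u v → g (ρ v) ≤ ρ u := by
    intro u v huv
    rcases le_or_gt (ρ v) (ρ u) with h | h
    · exact (hg_le _).trans h
    · set L := Real.log (ρ v) - Real.log (ρ u) with hLdef
      have hL : 0 < L := sub_pos.2 (Real.log_lt_log (hpos u) h)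
      have hT := hterm u v huv
      have hsq : (Real.log (ρ u) - Real.log (ρ v)) ^ 2 = L ^ 2 := by rw [hLdef]; ring
      rw [hsq] at hT
      have h1 : L ^ 2 * ρ v / 2 ≤ M := by nlinarith [hpos u, sq_nonneg L]
      have h2 : L ^ 2 ≤ 2 * M / ρ v := by
        rw [le_div_iff₀ (hpos v)]; nlinarith [hpos v]
      have h3 : L ≤ Real.sqrt (2 * M / ρ v) := by
        rw [Real.le_sqrt hL.le (by have := hpos v; positivity)]
        exact h2
      calc g (ρ v) = Real.exp (Real.log (ρ v)) * Real.exp (-Real.sqrt (2 * M / ρ v)) := by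
            rw [Real.exp_log (hpos v)]
        _ = Real.exp (Real.log (ρ v) - Real.sqrt (2 * M / ρ v)) := by
            rw [← Real.exp_add]; ring_nf
        _ ≤ Real.exp (Real.log (ρ u)) := by
            apply Real.exp_le_exp.2
            rw [hLdef] at h3
            linarith
        _ = ρ u := Real.exp_log (hpos u)
  -- propagate along walks
  have key : ∀ (a b : V) (w : G.Walk a b), g^[w.length] (ρ b) ≤ ρ a := by
    intro a b w
    induction w with
    | nil => simp
    | cons huv w ih =>
      rename_i u v c
      rw [SimpleGraph.Walk.length_cons, Function.iterate_succ_apply']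
      calc g (g^[w.length] (ρ c)) ≤ g (ρ v) := hg_mono ih
        _ ≤ ρ u := hstep u v huv
  -- find a large vertex
  obtain ⟨j₀, -, hj₀⟩ := Finset.exists_le_of_sum_le (f := fun _ : V => (n:ℝ)⁻¹) (g := ρ)
    Finset.univ_nonempty (by
      rw [hsum, Finset.sum_const, Finset.card_univ, nsmul_eq_mul, ← hn,
        mul_inv_cancel₀ (by exact_mod_cast hn0.ne')])
  -- find the min vertex
  obtain ⟨i₀, -, hi₀⟩ := Finset.exists_mem_eq_inf' (Finset.univ_nonempty) ρ
  obtain ⟨w⟩ := hG.preconnected i₀ j₀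
  have hlen : w.toPath.1.length < n := w.toPath.2.length_lt
  have hchain : g^[n] ((n:ℝ)⁻¹) ≤ ρ i₀ := by
    calc g^[n] ((n:ℝ)⁻¹) ≤ g^[w.toPath.1.length] ((n:ℝ)⁻¹) :=
          hiter_anti ((n:ℝ)⁻¹) hlen.le
      _ ≤ g^[w.toPath.1.length] (ρ j₀) := (hg_mono.iterate _) hj₀
      _ ≤ ρ i₀ := key i₀ j₀ w.toPath.1
  rw [← hi₀] at hchain
  linarith
end

section
/- For every M > 0 there exists c > 0 such that every ρ in the open probability simplex Δ° with I(ρ) ≤ M satisfies ρ_i ≥ c for all i ∈ V; i.e., sublevel sets of the discrete Fisher information within Δ° are uniformly bounded away from the boundary of the simplex. -/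
/-!
The term of an edge `{i, j}` is at least `(log ρ_i − log ρ_j)² ρ_j / 2`, so `I(ρ) ≤ M` and
`ρ_j ≥ a` force `ρ_i ≥ a · exp (−√(2M/a))`. Some vertex carries mass at least `1/|V|`, and every
vertex is joined to it by a path with fewer than `|V|` edges; iterating the bound along that
path gives a lower bound depending only on `M` and `|V|`.
-/

open Real

noncomputable def fisherNeighborBound (M a : ℝ) : ℝ :=
  a * exp (-√(2 * M / a))

lemma fisherNeighborBound_pos (M : ℝ) {a : ℝ} (ha : 0 < a) : 0 < fisherNeighborBound M a :=
  mul_pos ha (exp_pos _)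

lemma fisherNeighborBound_le (M : ℝ) {a : ℝ} (ha : 0 ≤ a) : fisherNeighborBound M a ≤ a :=
  mul_le_of_le_one_right ha (exp_le_one_iff.mpr (neg_nonpos.mpr (sqrt_nonneg _)))

lemma iterate_fisherNeighborBound_pos (M : ℝ) {a : ℝ} (ha : 0 < a) (k : ℕ) :
    0 < (fisherNeighborBound M)^[k] a := by
  induction k with
  | zero => exact ha
  | succ k ih =>
    rw [Function.iterate_succ_apply']
    exact fisherNeighborBound_pos M ih

lemma antitone_iterate_fisherNeighborBound (M : ℝ) {a : ℝ} (ha : 0 < a) :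
    Antitone fun k => (fisherNeighborBound M)^[k] a :=
  antitone_nat_of_succ_le fun k => by
    rw [Function.iterate_succ_apply']
    exact fisherNeighborBound_le M (iterate_fisherNeighborBound_pos M ha k).le

lemma fisherNeighborBound_le_of_fisher_term_le {M a x y : ℝ} (ha : 0 < a) (hx : 0 < x)
    (hay : a ≤ y) (h : (log x - log y) ^ 2 * (x + y) / 2 ≤ M) :
    fisherNeighborBound M a ≤ x := by
  have hsq : (log x - log y) ^ 2 ≤ 2 * M / a := by
    rw [le_div_iff₀ ha]
    nlinarith [sq_nonneg (log x - log y)]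
  have hdiff : log y - log x ≤ √(2 * M / a) := by
    have := sqrt_le_sqrt hsq
    rw [sqrt_sq_eq_abs] at this
    linarith [neg_abs_le (log x - log y)]
  have hlog : log a - √(2 * M / a) ≤ log x := by
    linarith [log_le_log ha hay]
  calc fisherNeighborBound M a = exp (log a - √(2 * M / a)) := by
        rw [fisherNeighborBound, sub_eq_add_neg, exp_add, exp_log ha]
    _ ≤ exp (log x) := exp_le_exp.mpr hlog
    _ = x := exp_log hx

section Graph

variable {V : Type*} [Fintype V] [DecidableEq V] {G : SimpleGraph V} [DecidableRel G.Adj]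
  {ρ : V → ℝ}

lemma fisher_term_le_discreteFisher (hρ : ∀ i, 0 < ρ i) {i j : V} (hij : G.Adj i j) :
    (log (ρ i) - log (ρ j)) ^ 2 * (ρ i + ρ j) / 2 ≤ discreteFisher G ρ := by
  have hnonneg : ∀ e ∈ G.edgeFinset, 0 ≤ Sym2.lift
      ⟨fun i j => (log (ρ i) - log (ρ j)) ^ 2 * (ρ i + ρ j) / 2, fun i j => by ring⟩ e := by
    intro e _
    induction e using Sym2.ind with
    | _ a b =>
      have := hρ a
      have := hρ b
      rw [Sym2.lift_mk]
      positivity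
  exact Finset.single_le_sum hnonneg (G.mem_edgeFinset.mpr (G.mem_edgeSet.mpr hij))

lemma iterate_fisherNeighborBound_length_le {M a : ℝ} (hρ : ∀ i, 0 < ρ i)
    (hI : discreteFisher G ρ ≤ M) (ha : 0 < a) {u v : V} (hv : a ≤ ρ v) (p : G.Walk u v) :
    (fisherNeighborBound M)^[p.length] a ≤ ρ u := by
  induction p with
  | nil => exact hv
  | @cons u w v huw q ih =>
    rw [SimpleGraph.Walk.length_cons, Function.iterate_succ_apply']
    exact fisherNeighborBound_le_of_fisher_term_le (iterate_fisherNeighborBound_pos M ha _)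
      (hρ u) (ih hv) ((fisher_term_le_discreteFisher hρ huw).trans hI)

end Graph

lemma exists_inv_card_le_of_sum_eq_one {V : Type*} [Fintype V] {ρ : V → ℝ}
    (hsum : ∑ i, ρ i = 1) : ∃ i, (Fintype.card V : ℝ)⁻¹ ≤ ρ i := by
  have hV : Nonempty V := by
    by_contra h
    simp [not_nonempty_iff.mp h] at hsum
  have hle : ∑ _i : V, (Fintype.card V : ℝ)⁻¹ ≤ ∑ i, ρ i := by
    rw [hsum, Finset.sum_const, Finset.card_univ, nsmul_eq_mul,
      mul_inv_cancel₀ (Nat.cast_ne_zero.mpr Fintype.card_ne_zero)]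
  obtain ⟨i, -, hi⟩ := Finset.exists_le_of_sum_le Finset.univ_nonempty hle
  exact ⟨i, hi⟩

theorem fisher_sublevel_bounded_away_general {V : Type*} [Fintype V] [DecidableEq V]
    (G : SimpleGraph V) [DecidableRel G.Adj] (hG : G.Connected)
    (M : ℝ) :
    ∃ c > 0, ∀ ρ : V → ℝ, (∀ i, 0 < ρ i) → (∑ i, ρ i = 1) →
      discreteFisher G ρ ≤ M → ∀ i, c ≤ ρ i := by
  have : Nonempty V := hG.nonempty
  have ha : (0 : ℝ) < (Fintype.card V : ℝ)⁻¹ := by positivity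
  refine ⟨(fisherNeighborBound M)^[Fintype.card V] (Fintype.card V : ℝ)⁻¹,
    iterate_fisherNeighborBound_pos M ha _, fun ρ hρ hsum hI i => ?_⟩
  obtain ⟨i₀, hi₀⟩ := exists_inv_card_le_of_sum_eq_one hsum
  obtain ⟨p, hp⟩ := (hG i i₀).some.toPath
  calc (fisherNeighborBound M)^[Fintype.card V] (Fintype.card V : ℝ)⁻¹
      ≤ (fisherNeighborBound M)^[p.length] (Fintype.card V : ℝ)⁻¹ :=
        antitone_iterate_fisherNeighborBound M ha hp.length_lt.le
    _ ≤ ρ i := iterate_fisherNeighborBound_length_le hρ hI ha hi₀ p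

/-- For every `M > 0` there is a `c > 0` such that every `ρ` in the open probability
simplex with `I(ρ) ≤ M` satisfies `ρ_i ≥ c` for all `i`: sublevel sets of the discrete
Fisher information are uniformly bounded away from the boundary of the simplex. -/
theorem fisher_sublevel_bounded_away {V : Type*} [Fintype V] [DecidableEq V] [Nonempty V]
    (G : SimpleGraph V) [DecidableRel G.Adj] (hG : G.Connected)
    (M : ℝ) (hM : 0 < M) :
    ∃ c > 0, ∀ ρ : V → ℝ, (∀ i, 0 < ρ i) → (∑ i, ρ i = 1) →
      discreteFisher G ρ ≤ M → ∀ i, c ≤ ρ i :=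
  fisher_sublevel_bounded_away_general G hG M
end

section
/- The discrete Fisher information I is strictly convex on the open probability simplex Δ°: for all ρ, ρ' ∈ Δ° with ρ ≠ ρ' and all θ ∈ (0,1), I(θρ + (1−θ)ρ') < θ I(ρ) + (1−θ) I(ρ'). -/
/-!
Each edge term `(log a − log b)² (a + b)/2` is the perspective `b · h(a/b)` of the strictly convex
function `h(x) = (log x)² (x + 1)/2`, so it is jointly convex in `(a, b)`, strictly so unless the
two points `(a, b)` and `(a', b')` are proportional. If `ρ ≠ ρ'` are both normalised, the ratio
`ρ/ρ'` is not constant, so on a connected graph it changes along some edge, and that edge makes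
the inequality strict.
-/

open Real Set

noncomputable def fisherProfile (x : ℝ) : ℝ := log x ^ 2 * (x + 1) / 2

lemma hasDerivAt_fisherProfile {x : ℝ} (hx : x ≠ 0) :
    HasDerivAt fisherProfile (log x * (x + 1) / x + log x ^ 2 / 2) x := by
  have h := (((hasDerivAt_log hx).pow 2).mul ((hasDerivAt_id x).add_const 1)).div_const 2
  refine h.congr_deriv ?_
  simp only [id, Pi.pow_apply]
  field_simp
  ring

lemma hasDerivAt_deriv_fisherProfile {x : ℝ} (hx : x ≠ 0) :
    HasDerivAt (deriv fisherProfile) ((x + 1 + log x * (x - 1)) / x ^ 2) x := by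
  have hderiv : deriv fisherProfile =ᶠ[nhds x] fun y => log y * (y + 1) / y + log y ^ 2 / 2 := by
    filter_upwards [isOpen_ne.mem_nhds hx] with y hy
    exact (hasDerivAt_fisherProfile hy).deriv
  have hlog := hasDerivAt_log hx
  refine HasDerivAt.congr_of_eventuallyEq ?_ hderiv
  refine ((hlog.mul ((hasDerivAt_id x).add_const 1)).div (hasDerivAt_id x) hx).add
    ((hlog.pow 2).div_const 2) |>.congr_deriv ?_
  simp only [id, Pi.mul_apply]
  field_simp
  ring

lemma log_mul_sub_one_nonneg {x : ℝ} (hx : 0 < x) : 0 ≤ log x * (x - 1) := by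
  rcases le_or_gt 1 x with h | h
  · exact mul_nonneg (log_nonneg h) (by linarith)
  · exact mul_nonneg_of_nonpos_of_nonpos (log_nonpos hx.le h.le) (by linarith)

lemma strictConvexOn_fisherProfile : StrictConvexOn ℝ (Ioi 0) fisherProfile := by
  refine strictConvexOn_of_deriv2_pos' (convex_Ioi 0) ?_ fun x (hx : 0 < x) => ?_
  · exact (((continuousOn_log.mono fun _ hx => ne_of_gt hx).pow 2).mul
      (continuousOn_id.add continuousOn_const)).div_const 2
  · rw [Function.iterate_succ_apply, Function.iterate_one,
      (hasDerivAt_deriv_fisherProfile hx.ne').deriv]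
    have := log_mul_sub_one_nonneg hx
    positivity

section Perspective

variable {s : Set ℝ} {f : ℝ → ℝ} {a b a' b' c c' : ℝ}

lemma perspective_ratio_eq (hb : b ≠ 0) (hb' : b' ≠ 0) (hB : c * b + c' * b' ≠ 0) :
    (c * a + c' * a') / (c * b + c' * b') =
      (c * b / (c * b + c' * b')) • (a / b) + (c' * b' / (c * b + c' * b')) • (a' / b') := by
  simp only [smul_eq_mul]
  field_simp

lemma perspective_weights_sum_eq_one (hB : c * b + c' * b' ≠ 0) :
    c * b / (c * b + c' * b') + c' * b' / (c * b + c' * b') = 1 := by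
  field_simp

lemma ConvexOn.perspective_le (hf : ConvexOn ℝ s f) (hb : 0 < b) (hb' : 0 < b')
    (hc : 0 ≤ c) (hc' : 0 ≤ c') (hB : 0 < c * b + c' * b') (ha : a / b ∈ s) (ha' : a' / b' ∈ s) :
    (c * b + c' * b') * f ((c * a + c' * a') / (c * b + c' * b')) ≤
      c * (b * f (a / b)) + c' * (b' * f (a' / b')) := by
  rw [perspective_ratio_eq hb.ne' hb'.ne' hB.ne']
  calc _ ≤ (c * b + c' * b') * ((c * b / (c * b + c' * b')) • f (a / b) +
          (c' * b' / (c * b + c' * b')) • f (a' / b')) := by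
        gcongr
        exact hf.2 ha ha' (by positivity) (by positivity) (perspective_weights_sum_eq_one hB.ne')
    _ = _ := by
      simp only [smul_eq_mul]
      field_simp

lemma StrictConvexOn.perspective_lt (hf : StrictConvexOn ℝ s f) (hb : 0 < b) (hb' : 0 < b')
    (hc : 0 < c) (hc' : 0 < c') (ha : a / b ∈ s) (ha' : a' / b' ∈ s) (hne : a / b ≠ a' / b') :
    (c * b + c' * b') * f ((c * a + c' * a') / (c * b + c' * b')) <
      c * (b * f (a / b)) + c' * (b' * f (a' / b')) := by
  have hB : 0 < c * b + c' * b' := by positivity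
  rw [perspective_ratio_eq hb.ne' hb'.ne' hB.ne']
  calc _ < (c * b + c' * b') * ((c * b / (c * b + c' * b')) • f (a / b) +
          (c' * b' / (c * b + c' * b')) • f (a' / b')) := by
        gcongr
        exact hf.2 ha ha' hne (by positivity) (by positivity)
          (perspective_weights_sum_eq_one hB.ne')
    _ = _ := by
      simp only [smul_eq_mul]
      field_simp

end Perspective

noncomputable def fisherEdge (a b : ℝ) : ℝ := (log a - log b) ^ 2 * (a + b) / 2

lemma fisherEdge_eq_mul_fisherProfile {a b : ℝ} (ha : 0 < a) (hb : 0 < b) :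
    fisherEdge a b = b * fisherProfile (a / b) := by
  unfold fisherEdge fisherProfile
  rw [log_div ha.ne' hb.ne']
  field_simp

section EdgeConvexity

variable {a b a' b' θ : ℝ}

lemma fisherEdge_convex_combination_le (ha : 0 < a) (hb : 0 < b) (ha' : 0 < a') (hb' : 0 < b')
    (hθ0 : 0 < θ) (hθ1 : θ < 1) :
    fisherEdge (θ * a + (1 - θ) * a') (θ * b + (1 - θ) * b') ≤
      θ * fisherEdge a b + (1 - θ) * fisherEdge a' b' := by
  have h1θ : 0 < 1 - θ := sub_pos.mpr hθ1
  rw [fisherEdge_eq_mul_fisherProfile (by positivity) (by positivity),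
    fisherEdge_eq_mul_fisherProfile ha hb, fisherEdge_eq_mul_fisherProfile ha' hb']
  exact strictConvexOn_fisherProfile.convexOn.perspective_le hb hb' hθ0.le h1θ.le
    (by positivity) (div_pos ha hb) (div_pos ha' hb')

lemma fisherEdge_convex_combination_lt (ha : 0 < a) (hb : 0 < b) (ha' : 0 < a') (hb' : 0 < b')
    (hθ0 : 0 < θ) (hθ1 : θ < 1) (hne : a * b' ≠ a' * b) :
    fisherEdge (θ * a + (1 - θ) * a') (θ * b + (1 - θ) * b') <
      θ * fisherEdge a b + (1 - θ) * fisherEdge a' b' := by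
  have h1θ : 0 < 1 - θ := sub_pos.mpr hθ1
  rw [fisherEdge_eq_mul_fisherProfile (by positivity) (by positivity),
    fisherEdge_eq_mul_fisherProfile ha hb, fisherEdge_eq_mul_fisherProfile ha' hb']
  refine strictConvexOn_fisherProfile.perspective_lt hb hb' hθ0 h1θ (div_pos ha hb)
    (div_pos ha' hb') fun h => hne ?_
  rwa [div_eq_div_iff hb.ne' hb'.ne'] at h

end EdgeConvexity

lemma SimpleGraph.Preconnected.apply_eq_of_forall_adj {V α : Type*} {G : SimpleGraph V}
    (hG : G.Preconnected) (f : V → α) (hf : ∀ i j, G.Adj i j → f i = f j) (i j : V) :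
    f i = f j := by
  obtain ⟨w⟩ := hG i j
  induction w with
  | nil => rfl
  | cons hadj _ ih => exact (hf _ _ hadj).trans ih

lemma SimpleGraph.Preconnected.exists_adj_mul_ne_of_ne {V : Type*} [Fintype V]
    {G : SimpleGraph V} (hG : G.Preconnected) {ρ ρ' : V → ℝ} (hρ' : ∀ i, 0 < ρ' i)
    (hsum : ∑ i, ρ i = ∑ i, ρ' i) (hne : ρ ≠ ρ') :
    ∃ i j, G.Adj i j ∧ ρ i * ρ' j ≠ ρ' i * ρ j := by
  by_contra! hprop
  have hratio : ∀ i j, ρ i / ρ' i = ρ j / ρ' j :=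
    hG.apply_eq_of_forall_adj _ fun i j hij => by
      rw [div_eq_div_iff (hρ' i).ne' (hρ' j).ne', hprop i j hij, mul_comm]
  obtain ⟨k, -⟩ := Function.ne_iff.mp hne
  have hρ : ∀ i, ρ i = ρ k / ρ' k * ρ' i := fun i => (div_eq_iff (hρ' i).ne').mp (hratio i k)
  have hpos : 0 < ∑ i, ρ' i := Finset.sum_pos (fun i _ => hρ' i) ⟨k, Finset.mem_univ k⟩
  have hc : ρ k / ρ' k = 1 := by
    rw [Finset.sum_congr rfl fun i _ => hρ i, ← Finset.mul_sum] at hsum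
    exact (mul_eq_right₀ hpos.ne').mp hsum
  exact hne (funext fun i => by rw [hρ i, hc, one_mul])

lemma discreteFisher_convex_combination_lt {V : Type*} [Fintype V] [DecidableEq V]
    {G : SimpleGraph V} [DecidableRel G.Adj] {ρ ρ' : V → ℝ} (hρ : ∀ i, 0 < ρ i)
    (hρ' : ∀ i, 0 < ρ' i) {θ : ℝ} (hθ0 : 0 < θ) (hθ1 : θ < 1)
    {i j : V} (hij : G.Adj i j) (hne : ρ i * ρ' j ≠ ρ' i * ρ j) :
    discreteFisher G (fun i => θ * ρ i + (1 - θ) * ρ' i) <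
      θ * discreteFisher G ρ + (1 - θ) * discreteFisher G ρ' := by
  unfold discreteFisher
  rw [Finset.mul_sum, Finset.mul_sum, ← Finset.sum_add_distrib]
  refine Finset.sum_lt_sum (fun e _ => ?_) ⟨s(i, j), G.mem_edgeFinset.mpr hij, ?_⟩
  · induction e using Sym2.ind with
    | _ a b => exact fisherEdge_convex_combination_le (hρ a) (hρ b) (hρ' a) (hρ' b) hθ0 hθ1
  · exact fisherEdge_convex_combination_lt (hρ i) (hρ j) (hρ' i) (hρ' j) hθ0 hθ1 hne

theorem fisher_strictly_convex_general {V : Type*} [Fintype V] [DecidableEq V]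
    (G : SimpleGraph V) [DecidableRel G.Adj] (hG : G.Connected)
    (ρ ρ' : V → ℝ)
    (hρpos : ∀ i, 0 < ρ i) (hρsum : ∑ i, ρ i = 1)
    (hρ'pos : ∀ i, 0 < ρ' i) (hρ'sum : ∑ i, ρ' i = 1)
    (hne : ρ ≠ ρ') (θ : ℝ) (hθ0 : 0 < θ) (hθ1 : θ < 1) :
    discreteFisher G (fun i => θ * ρ i + (1 - θ) * ρ' i) <
      θ * discreteFisher G ρ + (1 - θ) * discreteFisher G ρ' := by
  obtain ⟨i, j, hij, hcross⟩ :=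
    hG.preconnected.exists_adj_mul_ne_of_ne hρ'pos (hρsum.trans hρ'sum.symm) hne
  exact discreteFisher_convex_combination_lt hρpos hρ'pos hθ0 hθ1 hij hcross

/-- The discrete Fisher information is strictly convex on the open probability simplex:
for `ρ ≠ ρ'` in the open simplex and `θ ∈ (0,1)`,
`I(θρ + (1−θ)ρ') < θ I(ρ) + (1−θ) I(ρ')` (for a connected graph). -/
theorem fisher_strictly_convex {V : Type*} [Fintype V] [DecidableEq V] [Nonempty V]
    (G : SimpleGraph V) [DecidableRel G.Adj] (hG : G.Connected)
    (ρ ρ' : V → ℝ)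
    (hρpos : ∀ i, 0 < ρ i) (hρsum : ∑ i, ρ i = 1)
    (hρ'pos : ∀ i, 0 < ρ' i) (hρ'sum : ∑ i, ρ' i = 1)
    (hne : ρ ≠ ρ') (θ : ℝ) (hθ0 : 0 < θ) (hθ1 : θ < 1) :
    discreteFisher G (fun i => θ * ρ i + (1 - θ) * ρ' i) <
      θ * discreteFisher G ρ + (1 - θ) * discreteFisher G ρ' :=
  fisher_strictly_convex_general G hG ρ ρ' hρpos hρsum hρ'pos hρ'sum hne θ hθ0 hθ1
end

section
/- For every ρ : V → ℝ with ρ_i > 0 for all i ∈ V and every direction σ : V → ℝ, the function ε ↦ I(ρ + εσ) is twice differentiable at ε = 0 and its second derivative there equals Σ_{{i,j}∈E} t_{ij} (σ_i/ρ_i − σ_j/ρ_j)², where t_{ij} = (ρ_i − ρ_j)(log ρ_i − log ρ_j) + (ρ_i + ρ_j) > 0. -/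
/-- The coefficient `t_{ij} = (ρ_i − ρ_j)(log ρ_i − log ρ_j) + (ρ_i + ρ_j)`, as a symmetric
function on unordered pairs. -/
noncomputable def fisherHessCoeff {V : Type*} (ρ : V → ℝ) : Sym2 V → ℝ :=
  Sym2.lift ⟨fun i j => (ρ i - ρ j) * (Real.log (ρ i) - Real.log (ρ j)) + (ρ i + ρ j),
    fun i j => by ring⟩

open Real Filter Topology

lemma hasDerivAt_add_mul (p s t : ℝ) : HasDerivAt (fun t => p + t * s) s t :=
  (hasDerivAt_mul_const s).const_add p

section EdgeTerm

variable (p s q r : ℝ)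

noncomputable def fisherEdgeSlope (t : ℝ) : ℝ :=
  (log (p + t * s) - log (q + t * r)) * (s / (p + t * s) - r / (q + t * r))
      * (p + t * s + (q + t * r))
    + (log (p + t * s) - log (q + t * r)) ^ 2 * ((s + r) / 2)

lemma fisherEdgeSlope_comm : fisherEdgeSlope p s q r = fisherEdgeSlope q r p s := by
  funext t
  unfold fisherEdgeSlope
  ring

variable {p s q r}

lemma hasDerivAt_log_add_mul {t : ℝ} (h : 0 < p + t * s) :
    HasDerivAt (fun t => log (p + t * s)) (s / (p + t * s)) t :=
  (hasDerivAt_add_mul p s t).log h.ne'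

lemma hasDerivAt_fisherEdge {t : ℝ} (hp : 0 < p + t * s) (hq : 0 < q + t * r) :
    HasDerivAt
      (fun t => (log (p + t * s) - log (q + t * r)) ^ 2 * (p + t * s + (q + t * r)) / 2)
      (fisherEdgeSlope p s q r t) t := by
  have hlog := (hasDerivAt_log_add_mul hp).fun_sub (hasDerivAt_log_add_mul hq)
  have hsum := (hasDerivAt_add_mul p s t).fun_add (hasDerivAt_add_mul q r t)
  refine (((hlog.fun_pow 2).fun_mul hsum).div_const 2).congr_deriv ?_
  unfold fisherEdgeSlope
  ring

lemma hasDerivAt_fisherEdgeSlope_zero (hp : 0 < p) (hq : 0 < q) :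
    HasDerivAt (fisherEdgeSlope p s q r)
      (((p - q) * (log p - log q) + (p + q)) * (s / p - r / q) ^ 2) 0 := by
  have hp0 : 0 < p + 0 * s := by simpa using hp
  have hq0 : 0 < q + 0 * r := by simpa using hq
  have hlog := (hasDerivAt_log_add_mul hp0).fun_sub (hasDerivAt_log_add_mul hq0)
  have hratio := ((hasDerivAt_const 0 s).fun_div (hasDerivAt_add_mul p s 0) hp0.ne').fun_sub
    ((hasDerivAt_const 0 r).fun_div (hasDerivAt_add_mul q r 0) hq0.ne')
  have hsum := (hasDerivAt_add_mul p s 0).fun_add (hasDerivAt_add_mul q r 0)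
  refine (((hlog.fun_mul hratio).fun_mul hsum).fun_add
    ((hlog.fun_pow 2).mul_const ((s + r) / 2))).congr_deriv ?_
  simp only [zero_mul, add_zero]
  field_simp
  ring

end EdgeTerm

lemma sub_mul_log_sub_log_nonneg {a b : ℝ} (ha : 0 < a) (hb : 0 < b) :
    0 ≤ (a - b) * (log a - log b) := by
  rcases le_total a b with hab | hab
  · exact mul_nonneg_of_nonpos_of_nonpos (by linarith) (by linarith [log_le_log ha hab])
  · exact mul_nonneg (by linarith) (by linarith [log_le_log hb hab])

lemma fisherHessCoeff_pos {V : Type*} {ρ : V → ℝ} (hρ : ∀ i, 0 < ρ i) (e : Sym2 V) :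
    0 < fisherHessCoeff ρ e := by
  induction e with
  | _ i j =>
    have := sub_mul_log_sub_log_nonneg (hρ i) (hρ j)
    simp only [fisherHessCoeff, Sym2.lift_mk]
    linarith [hρ i, hρ j]

lemma eventually_forall_pos_add_mul {V : Type*} [Finite V] {ρ : V → ℝ} (hρ : ∀ i, 0 < ρ i)
    (σ : V → ℝ) : ∀ᶠ ε in 𝓝 (0 : ℝ), ∀ i, 0 < ρ i + ε * σ i :=
  eventually_all.2 fun i =>
    ((continuous_const.add (continuous_id.mul continuous_const)).tendsto' 0 (ρ i)
      (by simp)).eventually (eventually_gt_nhds (hρ i))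

section Graph

variable {V : Type*} [Fintype V] (G : SimpleGraph V) [DecidableRel G.Adj]
  (ρ σ : V → ℝ)

noncomputable def fisherSlope (ε : ℝ) : ℝ :=
  ∑ e ∈ G.edgeFinset,
    Sym2.lift ⟨fun i j => fisherEdgeSlope (ρ i) (σ i) (ρ j) (σ j) ε,
      fun _ _ => congrFun (fisherEdgeSlope_comm _ _ _ _) ε⟩ e

lemma hasDerivAt_discreteFisher_line [DecidableEq V] {ε : ℝ} (h : ∀ i, 0 < ρ i + ε * σ i) :
    HasDerivAt (fun ε => discreteFisher G (fun i => ρ i + ε * σ i)) (fisherSlope G ρ σ ε) ε := by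
  unfold discreteFisher fisherSlope
  refine HasDerivAt.fun_sum fun e _ => ?_
  induction e with
  | _ i j => exact hasDerivAt_fisherEdge (h i) (h j)

lemma hasDerivAt_fisherSlope_zero (hρ : ∀ i, 0 < ρ i) :
    HasDerivAt (fisherSlope G ρ σ)
      (∑ e ∈ G.edgeFinset,
        fisherHessCoeff ρ e *
          Sym2.lift ⟨fun i j => (σ i / ρ i - σ j / ρ j) ^ 2, fun i j => by ring⟩ e) 0 := by
  unfold fisherSlope
  refine HasDerivAt.fun_sum fun e _ => ?_
  induction e with
  | _ i j => exact hasDerivAt_fisherEdgeSlope_zero (hρ i) (hρ j)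

end Graph

/-- For `ρ > 0` and any direction `σ`, the function `ε ↦ I(ρ + εσ)` is twice differentiable
at `ε = 0`, with second derivative `Σ_{{i,j}∈E} t_{ij} (σ_i/ρ_i − σ_j/ρ_j)²`, where
`t_{ij} = (ρ_i − ρ_j)(log ρ_i − log ρ_j) + (ρ_i + ρ_j) > 0`. -/
theorem fisher_second_derivative {V : Type*} [Fintype V] [DecidableEq V]
    (G : SimpleGraph V) [DecidableRel G.Adj]
    (ρ σ : V → ℝ) (hρ : ∀ i, 0 < ρ i) :
    (∀ᶠ ε in nhds (0 : ℝ),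
        DifferentiableAt ℝ (fun ε : ℝ => discreteFisher G (fun i => ρ i + ε * σ i)) ε) ∧
    DifferentiableAt ℝ (deriv (fun ε : ℝ => discreteFisher G (fun i => ρ i + ε * σ i))) 0 ∧
    deriv (deriv (fun ε : ℝ => discreteFisher G (fun i => ρ i + ε * σ i))) 0 =
      ∑ e ∈ G.edgeFinset,
        fisherHessCoeff ρ e *
          Sym2.lift ⟨fun i j => (σ i / ρ i - σ j / ρ j) ^ 2, fun i j => by ring⟩ e ∧
    ∀ e ∈ G.edgeFinset, 0 < fisherHessCoeff ρ e := by
  have hfirst : ∀ᶠ ε in 𝓝 0, HasDerivAt (fun ε => discreteFisher G (fun i => ρ i + ε * σ i))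
      (fisherSlope G ρ σ ε) ε :=
    (eventually_forall_pos_add_mul hρ σ).mono fun ε h => hasDerivAt_discreteFisher_line G ρ σ h
  have hderiv : deriv (fun ε => discreteFisher G (fun i => ρ i + ε * σ i)) =ᶠ[𝓝 0]
      fisherSlope G ρ σ :=
    hfirst.mono fun ε h => h.deriv
  have hsecond := hasDerivAt_fisherSlope_zero G ρ σ hρ
  exact ⟨hfirst.mono fun ε h => h.differentiableAt,
    hderiv.differentiableAt_iff.mpr hsecond.differentiableAt,
    hderiv.deriv_eq.trans hsecond.deriv, fun e _ => fisherHessCoeff_pos hρ e⟩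
end

section
/- Let H be a symmetric positive definite n×n real matrix, G a symmetric n×n real matrix, and 0 < a ≤ b constants such that a xᵀ H x ≤ xᵀ G x ≤ b xᵀ H x for all x ∈ ℝⁿ. Set t = 2/(a + b). Then for every x ∈ ℝⁿ, ‖x − t H⁻¹ G x‖_H ≤ ((b − a)/(a + b)) ‖x‖_H. -/
/-!
Write `A = H⁻¹ G`, which is self-adjoint for the inner product `⟪u, v⟫_H = uᵀ H v`. The
hypotheses say `a ≤ A ≤ b` in that inner product, so `(A - a)(b - A) ≥ 0`, i.e.
`‖A x‖²_H ≤ (a + b) xᵀ G x - a b ‖x‖²_H`. Expanding `‖x - t A x‖²_H` and inserting this bound,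
the choice `t (a + b) = 2` cancels the `xᵀ G x` terms and leaves `(1 - t² a b) ‖x‖²_H`, which is
`((b - a)/(a + b))² ‖x‖²_H`.
-/

open Matrix

section QuadraticForms

variable {ι R : Type*} [Fintype ι]

theorem Matrix.IsSymm.dotProduct_mulVec_comm [CommSemiring R] {A : Matrix ι ι R}
    (hA : A.IsSymm) (u v : ι → R) : u ⬝ᵥ A *ᵥ v = v ⬝ᵥ A *ᵥ u := by
  rw [← dotProduct_transpose_mulVec, hA.eq]

theorem Matrix.IsSymm.dotProduct_mulVec_sub_smul [CommRing R] {A : Matrix ι ι R}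
    (hA : A.IsSymm) (u w : ι → R) (t : R) :
    (u - t • w) ⬝ᵥ A *ᵥ (u - t • w) =
      u ⬝ᵥ A *ᵥ u - 2 * t * (u ⬝ᵥ A *ᵥ w) + t ^ 2 * (w ⬝ᵥ A *ᵥ w) := by
  simp only [mulVec_sub, mulVec_smul, sub_dotProduct, dotProduct_sub, smul_dotProduct,
    dotProduct_smul, smul_eq_mul, hA.dotProduct_mulVec_comm w u]
  ring

variable [CommRing R] [LinearOrder R] [IsStrictOrderedRing R]

theorem Matrix.IsSymm.dotProduct_mulVec_sq_le {M : Matrix ι ι R} (hM : M.IsSymm)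
    (hM₀ : ∀ x, 0 ≤ x ⬝ᵥ M *ᵥ x) (x y : ι → R) :
    (x ⬝ᵥ M *ᵥ y) ^ 2 ≤ (x ⬝ᵥ M *ᵥ x) * (y ⬝ᵥ M *ᵥ y) := by
  classical
  simpa only [toBilin'_apply'] using
    M.toBilin'.apply_sq_le_of_symm (by simpa only [toBilin'_apply'] using hM₀)
      (LinearMap.BilinForm.isSymm_iff.1 (isSymm_toBilin'_iff_isSymm.2 hM)) x y

/-- Matrix form of `‖P x‖² ≤ c ⟪P x, x⟫` for an operator `0 ≤ P ≤ c`, with `P = H⁻¹ M`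
and `v = P x`. -/
theorem dotProduct_mulVec_le_of_mulVec_eq {H M : Matrix ι ι R} {c : R} (hc : 0 ≤ c)
    (hM : M.IsSymm) (hM₀ : ∀ y, 0 ≤ y ⬝ᵥ M *ᵥ y)
    (hMc : ∀ y, y ⬝ᵥ M *ᵥ y ≤ c * (y ⬝ᵥ H *ᵥ y)) {v x : ι → R} (hv : H *ᵥ v = M *ᵥ x) :
    v ⬝ᵥ H *ᵥ v ≤ c * (x ⬝ᵥ M *ᵥ x) := by
  have hvv : v ⬝ᵥ H *ᵥ v = v ⬝ᵥ M *ᵥ x := by rw [hv]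
  have hsq : (v ⬝ᵥ H *ᵥ v) ^ 2 ≤ c * (v ⬝ᵥ H *ᵥ v) * (x ⬝ᵥ M *ᵥ x) :=
    calc (v ⬝ᵥ H *ᵥ v) ^ 2 = (v ⬝ᵥ M *ᵥ x) ^ 2 := by rw [hvv]
      _ ≤ (v ⬝ᵥ M *ᵥ v) * (x ⬝ᵥ M *ᵥ x) := hM.dotProduct_mulVec_sq_le hM₀ v x
      _ ≤ c * (v ⬝ᵥ H *ᵥ v) * (x ⬝ᵥ M *ᵥ x) := mul_le_mul_of_nonneg_right (hMc v) (hM₀ x)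
  nlinarith [mul_nonneg hc (hM₀ x)]

theorem dotProduct_mulVec_le_of_loewner_bounds {H G : Matrix ι ι R} {a b : R}
    (hH : H.IsSymm) (hG : G.IsSymm) (hab : a ≤ b)
    (hlow : ∀ y, a * (y ⬝ᵥ H *ᵥ y) ≤ y ⬝ᵥ G *ᵥ y)
    (hhigh : ∀ y, y ⬝ᵥ G *ᵥ y ≤ b * (y ⬝ᵥ H *ᵥ y)) {x w : ι → R} (hw : H *ᵥ w = G *ᵥ x) :
    w ⬝ᵥ H *ᵥ w ≤ (a + b) * (x ⬝ᵥ G *ᵥ x) - a * b * (x ⬝ᵥ H *ᵥ x) := by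
  have hform : ∀ y, y ⬝ᵥ (G - a • H) *ᵥ y = y ⬝ᵥ G *ᵥ y - a * (y ⬝ᵥ H *ᵥ y) := fun y ↦ by
    rw [sub_mulVec, smul_mulVec, dotProduct_sub, dotProduct_smul, smul_eq_mul]
  have hbound := dotProduct_mulVec_le_of_mulVec_eq (H := H) (sub_nonneg.2 hab)
    (hG.sub (hH.smul a)) (fun y ↦ by rw [hform]; linarith [hlow y])
    (fun y ↦ by rw [hform]; linarith [hhigh y]) (v := w - a • x) (x := x)
    (by rw [mulVec_sub, mulVec_smul, hw, sub_mulVec, smul_mulVec])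
  have hxw : x ⬝ᵥ H *ᵥ w = x ⬝ᵥ G *ᵥ x := by rw [hw]
  rw [hH.dotProduct_mulVec_sub_smul, hH.dotProduct_mulVec_comm w x, hxw, hform] at hbound
  linarith

end QuadraticForms

theorem dotProduct_mulVec_sub_smul_le_of_loewner_bounds {ι K : Type*} [Fintype ι] [Field K]
    [LinearOrder K] [IsStrictOrderedRing K] {H G : Matrix ι ι K} {a b : K}
    (hH : H.IsSymm) (hG : G.IsSymm) (hab : a ≤ b) (hab₀ : 0 < a + b)
    (hlow : ∀ y, a * (y ⬝ᵥ H *ᵥ y) ≤ y ⬝ᵥ G *ᵥ y)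
    (hhigh : ∀ y, y ⬝ᵥ G *ᵥ y ≤ b * (y ⬝ᵥ H *ᵥ y)) {x w : ι → K} (hw : H *ᵥ w = G *ᵥ x) :
    (x - (2 / (a + b)) • w) ⬝ᵥ H *ᵥ (x - (2 / (a + b)) • w) ≤
      ((b - a) / (a + b)) ^ 2 * (x ⬝ᵥ H *ᵥ x) := by
  have hAw := dotProduct_mulVec_le_of_loewner_bounds hH hG hab hlow hhigh hw
  have hxw : x ⬝ᵥ H *ᵥ w = x ⬝ᵥ G *ᵥ x := by rw [hw]
  rw [hH.dotProduct_mulVec_sub_smul, hxw]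
  set t := 2 / (a + b)
  have ht : t * (a + b) = 2 := div_mul_cancel₀ 2 hab₀.ne'
  have hρ : ((b - a) / (a + b)) ^ 2 = 1 - t ^ 2 * (a * b) := by
    simp only [t]
    field_simp
    ring
  calc x ⬝ᵥ H *ᵥ x - 2 * t * (x ⬝ᵥ G *ᵥ x) + t ^ 2 * (w ⬝ᵥ H *ᵥ w)
      ≤ x ⬝ᵥ H *ᵥ x - 2 * t * (x ⬝ᵥ G *ᵥ x) +
          t ^ 2 * ((a + b) * (x ⬝ᵥ G *ᵥ x) - a * b * (x ⬝ᵥ H *ᵥ x)) := by gcongr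
    _ = ((b - a) / (a + b)) ^ 2 * (x ⬝ᵥ H *ᵥ x) := by
        rw [hρ]
        linear_combination t * (x ⬝ᵥ G *ᵥ x) * ht

/-- Let `H` be symmetric positive definite, `G` symmetric, and `0 < a ≤ b` with
`a xᵀHx ≤ xᵀGx ≤ b xᵀHx` for all `x`. With `t = 2/(a+b)`, for every `x`,
`‖x − t H⁻¹ G x‖_H ≤ ((b − a)/(a + b)) ‖x‖_H`, where `‖x‖_H = (xᵀ H x)^{1/2}`. -/
theorem preconditioned_contraction (n : ℕ)
    (H G : Matrix (Fin n) (Fin n) ℝ) (hH : H.PosDef) (hG : G.IsSymm)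
    (a b : ℝ) (ha : 0 < a) (hab : a ≤ b)
    (hlow : ∀ x : Fin n → ℝ, a * (x ⬝ᵥ H.mulVec x) ≤ x ⬝ᵥ G.mulVec x)
    (hhigh : ∀ x : Fin n → ℝ, x ⬝ᵥ G.mulVec x ≤ b * (x ⬝ᵥ H.mulVec x)) :
    ∀ x : Fin n → ℝ,
      Real.sqrt ((x - (2 / (a + b)) • H⁻¹.mulVec (G.mulVec x)) ⬝ᵥ
          H.mulVec (x - (2 / (a + b)) • H⁻¹.mulVec (G.mulVec x))) ≤
        (b - a) / (a + b) * Real.sqrt (x ⬝ᵥ H.mulVec x) := by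
  intro x
  have hab₀ : 0 < a + b := by linarith
  have hHs : H.IsSymm := isHermitian_iff_isSymm.1 hH.isHermitian
  have hw : H *ᵥ H⁻¹ *ᵥ G *ᵥ x = G *ᵥ x := by
    rw [mulVec_mulVec, mul_nonsing_inv _ (isUnit_iff_ne_zero.2 hH.det_pos.ne'), one_mulVec]
  calc _ ≤ √(((b - a) / (a + b)) ^ 2 * (x ⬝ᵥ H *ᵥ x)) := Real.sqrt_le_sqrt
        (dotProduct_mulVec_sub_smul_le_of_loewner_bounds hHs hG hab hab₀ hlow hhigh hw)
    _ = (b - a) / (a + b) * √(x ⬝ᵥ H *ᵥ x) := by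
        rw [Real.sqrt_mul (sq_nonneg _), Real.sqrt_sq (div_nonneg (by linarith) hab₀.le)]
end

section
/- Let F : ℝⁿ → ℝ be convex and differentiable, χ : ℝⁿ → ℝ convex, and C ⊆ ℝⁿ a convex set. Let u, u* ∈ ℝⁿ, and suppose G is a symmetric n×n matrix with ∇F(u) − ∇F(u*) = G(u − u*) and m‖x‖² ≤ xᵀ G x ≤ M‖x‖² for all x ∈ ℝⁿ, where 0 < m ≤ M. Assume u* minimizes F + χ over C, set t = 2/(m + M), and let u⁺ minimize z ↦ (1/(2t))‖z − (u − t∇F(u))‖² + χ(z) over C. Then the proximal gradient step contracts with factor governed by the condition number κ_G = M/m of G: ‖u⁺ − u*‖ ≤ ((M − m)/(M + m)) ‖u − u*‖ = (|1 − κ_G|/(1 + κ_G)) ‖u − u*‖, where ‖·‖ is the Euclidean norm on ℝⁿ. -/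
open Matrix

open scoped RealInnerProductSpace

/-!
Both `u⁺` and `u*` satisfy first-order variational inequalities on `C`, obtained by bounding the
convex term `χ` by its chord along segments in `C`. Adding the two inequalities is the firm
nonexpansiveness of the proximal map: `‖u⁺ - u*‖` is at most the distance between the gradient
steps `u - t∇F(u)` and `u* - t∇F(u*)`, which is `‖(I - tG)(u - u*)‖`. The operator `I - tG` is
symmetric with Rayleigh quotient in `[-(M - m)/(M + m), (M - m)/(M + m)]` for `t = 2/(m + M)`,
and for a symmetric operator the norm is the supremum of the absolute Rayleigh quotient.
-/

section Optimality

variable {E : Type*} [NormedAddCommGroup E] [NormedSpace ℝ E]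

theorem IsMinOn.sub_le_hasFDerivAt_of_add_convexOn {f χ : E → ℝ} {f' : E →L[ℝ] ℝ}
    {C : Set E} {p z : E} (hχ : ConvexOn ℝ C χ) (hf : HasFDerivAt f f' p)
    (hmin : IsMinOn (fun w => f w + χ w) C p) (hp : p ∈ C) (hz : z ∈ C) :
    χ p - χ z ≤ f' (z - p) := by
  -- `χ` is replaced by its chord from `p` to `z`, which keeps `0` a minimizer on `[0, 1]`.
  set g : ℝ → ℝ := fun l => f (p + l • (z - p)) + l * (χ z - χ p)
  have hg_min : IsMinOn g (Set.Icc 0 1) 0 := by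
    rintro l ⟨hl0, hl1⟩
    have hcomb : p + l • (z - p) = (1 - l) • p + l • z := by module
    have hmem : p + l • (z - p) ∈ C := hcomb ▸ hχ.1 hp hz (by linarith) hl0 (by ring)
    have hχl : χ (p + l • (z - p)) ≤ (1 - l) * χ p + l * χ z :=
      hcomb ▸ hχ.2 hp hz (by linarith) hl0 (by ring)
    have hmin_l := isMinOn_iff.mp hmin _ hmem
    show g 0 ≤ g l
    simp only [g, zero_smul, add_zero, zero_mul]
    linarith
  have hg : HasDerivAt g (f' (z - p) + (χ z - χ p)) 0 := by
    have hline : HasDerivAt (fun l : ℝ => p + l • (z - p)) (z - p) 0 := by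
      simpa using ((hasDerivAt_id (0 : ℝ)).smul_const (z - p)).const_add p
    have hf0 : HasFDerivAt f f' (p + (0 : ℝ) • (z - p)) := by simpa using hf
    exact (hf0.comp_hasDerivAt 0 hline).add ((hasDerivAt_id 0).mul_const (χ z - χ p)) |>.congr_deriv
      (by simp)
  have hdir : (1 : ℝ) ∈ posTangentConeAt (Set.Icc 0 1) 0 :=
    mem_posTangentConeAt_of_segment_subset (by simp [segment_eq_Icc])
  have hg_nonneg := hg_min.localize.hasFDerivWithinAt_nonneg hg.hasFDerivAt.hasFDerivWithinAt hdir
  rw [ContinuousLinearMap.toSpanSingleton_apply, one_smul] at hg_nonneg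
  linarith

end Optimality

section InnerProductSpace

variable {E : Type*} [NormedAddCommGroup E] [InnerProductSpace ℝ E]

theorem IsMinOn.mul_sub_le_inner_of_prox {χ : E → ℝ} {C : Set E} {t : ℝ} (ht : 0 < t)
    {v p z : E} (hχ : ConvexOn ℝ C χ)
    (hmin : IsMinOn (fun w => 1 / (2 * t) * ‖w - v‖ ^ 2 + χ w) C p) (hp : p ∈ C) (hz : z ∈ C) :
    t * (χ p - χ z) ≤ ⟪p - v, z - p⟫ := by
  have hf := (((hasFDerivAt_id p).sub_const v).norm_sq).const_mul (1 / (2 * t))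
  refine (le_div_iff₀' ht).1 ((hmin.sub_le_hasFDerivAt_of_add_convexOn hχ hf hp hz).trans_eq ?_)
  simp only [_root_.smul_apply, ContinuousLinearMap.comp_apply, innerSL_apply_apply, id_eq,
    ContinuousLinearMap.id_apply, smul_eq_mul, nsmul_eq_mul, Nat.cast_ofNat]
  field_simp

theorem abs_inner_sub_smul_apply_self_le {T : E → E} {m M : ℝ} (hpos : 0 < m + M)
    (hlow : ∀ x, m * ‖x‖ ^ 2 ≤ ⟪x, T x⟫) (hhigh : ∀ x, ⟪x, T x⟫ ≤ M * ‖x‖ ^ 2) (x : E) :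
    |⟪x - (2 / (m + M)) • T x, x⟫| ≤ (M - m) / (M + m) * ‖x‖ ^ 2 := by
  have ht : 0 ≤ 2 / (m + M) := by positivity
  have hlow' := mul_le_mul_of_nonneg_left (hlow x) ht
  have hhigh' := mul_le_mul_of_nonneg_left (hhigh x) ht
  have hne : M + m ≠ 0 := by linarith
  have hne' : m + M ≠ 0 := by linarith
  have hm : 1 - 2 / (m + M) * m = (M - m) / (M + m) := by field_simp; ring
  have hM : 1 - 2 / (m + M) * M = -((M - m) / (M + m)) := by field_simp; ring
  rw [inner_sub_left, real_inner_smul_left, real_inner_self_eq_norm_sq, real_inner_comm, abs_le]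
  constructor <;> nlinarith

theorem ContinuousLinearMap.norm_le_of_abs_inner_apply_self_le {A : E →L[ℝ] E}
    (hA : (A : E →ₗ[ℝ] E).IsSymmetric) {c : ℝ} (hc : 0 ≤ c)
    (h : ∀ x, |⟪A x, x⟫| ≤ c * ‖x‖ ^ 2) : ‖A‖ ≤ c := by
  rw [A.norm_eq_iSup_rayleighQuotient hA]
  refine ciSup_le fun x => ?_
  rcases eq_or_ne x 0 with rfl | hx
  · simpa using hc
  rw [ContinuousLinearMap.rayleighQuotient, ContinuousLinearMap.reApplyInnerSelf_apply, abs_div,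
    abs_sq, div_le_iff₀ (by positivity)]
  exact h x

theorem norm_sub_le_of_prox_optimality {χ : E → ℝ} {t : ℝ} (ht : 0 ≤ t) {v p q g : E}
    (hp : t * (χ p - χ q) ≤ ⟪p - v, q - p⟫) (hq : χ q - χ p ≤ ⟪g, p - q⟫) :
    ‖p - q‖ ≤ ‖v - (q - t • g)‖ := by
  have hsum : ⟪p - v, q - p⟫ + t * ⟪g, p - q⟫ = ⟪v - (q - t • g), p - q⟫ - ‖p - q‖ ^ 2 := by
    rw [← real_inner_self_eq_norm_sq, ← real_inner_smul_left, ← neg_sub p q, inner_neg_right,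
      ← inner_sub_left, neg_add_eq_sub, ← inner_sub_left]
    congr 1
    abel
  have hinner : ‖p - q‖ ^ 2 ≤ ⟪v - (q - t • g), p - q⟫ := by
    nlinarith [mul_le_mul_of_nonneg_left hq ht]
  have hsq := hinner.trans (real_inner_le_norm (v - (q - t • g)) (p - q))
  nlinarith [norm_nonneg (p - q), norm_nonneg (v - (q - t • g))]

theorem norm_sub_smul_apply_le_of_inner_bounds {T : E →L[ℝ] E}
    (hT : (T : E →ₗ[ℝ] E).IsSymmetric) {m M : ℝ} (hmM : m ≤ M) (hpos : 0 < m + M)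
    (hlow : ∀ x, m * ‖x‖ ^ 2 ≤ ⟪x, T x⟫) (hhigh : ∀ x, ⟪x, T x⟫ ≤ M * ‖x‖ ^ 2) (x : E) :
    ‖x - (2 / (m + M)) • T x‖ ≤ (M - m) / (M + m) * ‖x‖ := by
  set A := ContinuousLinearMap.id ℝ E - (2 / (m + M)) • T
  have hA : (A : E →ₗ[ℝ] E).IsSymmetric :=
    LinearMap.IsSymmetric.id.sub (hT.smul (conj_trivial _))
  have hc : 0 ≤ (M - m) / (M + m) := div_nonneg (by linarith) (by linarith)
  have hA_norm : ‖A‖ ≤ (M - m) / (M + m) :=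
    A.norm_le_of_abs_inner_apply_self_le hA hc (abs_inner_sub_smul_apply_self_le hpos hlow hhigh)
  exact A.le_of_opNorm_le hA_norm x

end InnerProductSpace

theorem prox_gradient_linear_contraction_general (n : ℕ)
    (F : EuclideanSpace ℝ (Fin n) → ℝ)
    (hFdiff : Differentiable ℝ F)
    (χ : EuclideanSpace ℝ (Fin n) → ℝ) (hχ : ConvexOn ℝ Set.univ χ)
    (C : Set (EuclideanSpace ℝ (Fin n))) (hC : Convex ℝ C)
    (u ustar : EuclideanSpace ℝ (Fin n))
    (G : Matrix (Fin n) (Fin n) ℝ) (hGsymm : G.IsSymm)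
    (hGrad : gradient F u - gradient F ustar = Matrix.toEuclideanLin G (u - ustar))
    (m M : ℝ) (hm : 0 < m) (hmM : m ≤ M)
    (hlow : ∀ x : EuclideanSpace ℝ (Fin n),
      m * ‖x‖ ^ 2 ≤ inner ℝ x (Matrix.toEuclideanLin G x))
    (hhigh : ∀ x : EuclideanSpace ℝ (Fin n),
      (inner ℝ x (Matrix.toEuclideanLin G x) : ℝ) ≤ M * ‖x‖ ^ 2)
    (hustarC : ustar ∈ C)
    (hustar : ∀ z ∈ C, F ustar + χ ustar ≤ F z + χ z)
    (uplus : EuclideanSpace ℝ (Fin n)) (huplusC : uplus ∈ C)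
    (huplus : ∀ z ∈ C,
      (1 / (2 * (2 / (m + M)))) *
          ‖uplus - (u - (2 / (m + M)) • gradient F u)‖ ^ 2 + χ uplus ≤
        (1 / (2 * (2 / (m + M)))) *
          ‖z - (u - (2 / (m + M)) • gradient F u)‖ ^ 2 + χ z) :
    ‖uplus - ustar‖ ≤ (M - m) / (M + m) * ‖u - ustar‖ := by
  have hpos : 0 < m + M := by linarith
  set t := 2 / (m + M)
  set T := toEuclideanCLM (𝕜 := ℝ) G
  have hχC : ConvexOn ℝ C χ := hχ.subset (Set.subset_univ C) hC
  have hprox : t * (χ uplus - χ ustar) ≤ ⟪uplus - (u - t • gradient F u), ustar - uplus⟫ :=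
    IsMinOn.mul_sub_le_inner_of_prox (by positivity) hχC huplus huplusC hustarC
  have hopt : χ ustar - χ uplus ≤ ⟪gradient F ustar, uplus - ustar⟫ :=
    IsMinOn.sub_le_hasFDerivAt_of_add_convexOn hχC (hFdiff ustar).hasGradientAt.hasFDerivAt
      hustar hustarC huplusC
  have hstep : u - t • gradient F u - (ustar - t • gradient F ustar)
      = (u - ustar) - t • T (u - ustar) := by
    rw [show T (u - ustar) = _ from hGrad.symm]
    module
  calc ‖uplus - ustar‖ ≤ ‖u - t • gradient F u - (ustar - t • gradient F ustar)‖ :=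
        norm_sub_le_of_prox_optimality (by positivity) hprox hopt
    _ ≤ (M - m) / (M + m) * ‖u - ustar‖ := by
      rw [hstep]
      exact norm_sub_smul_apply_le_of_inner_bounds (isSymmetric_toEuclideanLin_iff.mpr hGsymm)
        hmM hpos hlow hhigh _

/-- Linear contraction of the proximal gradient step, with rate governed by the condition
number `κ_G = M/m` of `G`. Let `F` be convex and differentiable, `χ` convex, `C` convex.
Suppose `G` is symmetric with `∇F(u) − ∇F(u*) = G(u − u*)` and `m‖x‖² ≤ xᵀGx ≤ M‖x‖²`
for all `x`, `0 < m ≤ M`. If `u*` minimizes `F + χ` over `C`, `t = 2/(m+M)`, and `u⁺`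
minimizes `z ↦ (1/(2t))‖z − (u − t∇F(u))‖² + χ(z)` over `C`, then
`‖u⁺ − u*‖ ≤ ((M − m)/(M + m))‖u − u*‖` in the Euclidean norm. -/
theorem prox_gradient_linear_contraction (n : ℕ)
    (F : EuclideanSpace ℝ (Fin n) → ℝ)
    (hF : ConvexOn ℝ Set.univ F) (hFdiff : Differentiable ℝ F)
    (χ : EuclideanSpace ℝ (Fin n) → ℝ) (hχ : ConvexOn ℝ Set.univ χ)
    (C : Set (EuclideanSpace ℝ (Fin n))) (hC : Convex ℝ C)
    (u ustar : EuclideanSpace ℝ (Fin n))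
    (G : Matrix (Fin n) (Fin n) ℝ) (hGsymm : G.IsSymm)
    (hGrad : gradient F u - gradient F ustar = Matrix.toEuclideanLin G (u - ustar))
    (m M : ℝ) (hm : 0 < m) (hmM : m ≤ M)
    (hlow : ∀ x : EuclideanSpace ℝ (Fin n),
      m * ‖x‖ ^ 2 ≤ inner ℝ x (Matrix.toEuclideanLin G x))
    (hhigh : ∀ x : EuclideanSpace ℝ (Fin n),
      (inner ℝ x (Matrix.toEuclideanLin G x) : ℝ) ≤ M * ‖x‖ ^ 2)
    (hustarC : ustar ∈ C)
    (hustar : ∀ z ∈ C, F ustar + χ ustar ≤ F z + χ z)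
    (uplus : EuclideanSpace ℝ (Fin n)) (huplusC : uplus ∈ C)
    (huplus : ∀ z ∈ C,
      (1 / (2 * (2 / (m + M)))) *
          ‖uplus - (u - (2 / (m + M)) • gradient F u)‖ ^ 2 + χ uplus ≤
        (1 / (2 * (2 / (m + M)))) *
          ‖z - (u - (2 / (m + M)) • gradient F u)‖ ^ 2 + χ z) :
    ‖uplus - ustar‖ ≤ (M - m) / (M + m) * ‖u - ustar‖ :=
  prox_gradient_linear_contraction_general n F hFdiff χ hχ C hC u ustar G hGsymm hGrad m M hm hmM
    hlow hhigh hustarC hustar uplus huplusC huplus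
end

section
/- Let Ω ⊂ ℝⁿ be a closed rectangular box (a product of nondegenerate compact intervals) with outward unit normal ν on ∂Ω. Let ρ : [0,1] × Ω → ℝ be continuously differentiable with ρ(t, x) > 0 everywhere, and let m : [0,1] × Ω → ℝⁿ be continuously differentiable, satisfying the continuity equation ∂_t ρ(t, x) + ∇_x · m(t, x) = 0 on [0,1] × Ω and the zero-flux boundary condition m(t, x) · ν(x) = 0 for all (t, x) ∈ [0,1] × ∂Ω. Then ∫₀¹ ∫_Ω m(t, x) · ∇_x log ρ(t, x) dx dt = ∫_Ω ρ(1, x) log ρ(1, x) dx − ∫_Ω ρ(0, x) log ρ(0, x) dx. -/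
open MeasureTheory

/-! In space-time, the field `(ρ log ρ, m (log ρ + 1))` has divergence
`(log ρ + 1) (∂ₜρ + ∇ₓ · m) + m · ∇ₓρ / ρ`, which equals `m · ∇ₓ log ρ` by the continuity equation.
The divergence theorem on the box `[0, 1] × Ω` turns its integral into the outward flux through
the boundary: the lateral faces `[0, 1] × ∂Ω` contribute nothing by the zero-flux condition, and the
faces `t = 1` and `t = 0` contribute `± ∫_Ω ρ log ρ`. -/

section PartialDerivatives

variable {𝕜 E F G : Type*} [NontriviallyNormedField 𝕜] [NormedAddCommGroup E] [NormedSpace 𝕜 E]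
  [NormedAddCommGroup F] [NormedSpace 𝕜 F] [NormedAddCommGroup G] [NormedSpace 𝕜 G]

theorem fderiv_comp_prodMk_right_apply {f : E × F → G} {e : E} {x : F}
    (hf : DifferentiableAt 𝕜 f (e, x)) (v : F) :
    fderiv 𝕜 (fun y => f (e, y)) x v = fderiv 𝕜 f (e, x) (0, v) := by
  have h : HasFDerivAt (fun y => f (e, y)) ((fderiv 𝕜 f (e, x)).comp (.inr 𝕜 E F)) x :=
    hf.hasFDerivAt.comp x (hasFDerivAt_prodMk_right e x)
  rw [h.fderiv]
  rfl

theorem deriv_comp_prodMk_left {f : 𝕜 × F → G} {t : 𝕜} {x : F}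
    (hf : DifferentiableAt 𝕜 f (t, x)) :
    deriv (fun s => f (s, x)) t = fderiv 𝕜 f (t, x) (1, 0) := by
  have h : HasFDerivAt (fun s => f (s, x)) ((fderiv 𝕜 f (t, x)).comp (.inl 𝕜 𝕜 F)) t :=
    hf.hasFDerivAt.comp t (hasFDerivAt_prodMk_left t x)
  rw [h.hasDerivAt.deriv]
  rfl

end PartialDerivatives

theorem setIntegral_Icc_prod {α β E : Type*} [Preorder α] [Preorder β] [MeasureSpace α]
    [MeasureSpace β] [SFinite (volume : Measure α)] [SFinite (volume : Measure β)]
    [NormedAddCommGroup E] [NormedSpace ℝ E] {f : α × β → E} {a a' : α} {b b' : β}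
    (hf : IntegrableOn f (Set.Icc (a, b) (a', b'))) :
    ∫ p in Set.Icc (a, b) (a', b'), f p = ∫ x in Set.Icc a a', ∫ y in Set.Icc b b', f (x, y) := by
  rw [Set.Icc_prod_eq, Measure.volume_eq_prod] at hf ⊢
  exact setIntegral_prod f hf

namespace TimeSpace

variable {n : ℕ}

def equiv (n : ℕ) : (ℝ × (Fin n → ℝ)) ≃L[ℝ] (Fin (n + 1) → ℝ) :=
  Fin.consEquivL ℝ (fun _ => ℝ)

theorem equiv_apply (p : ℝ × (Fin n → ℝ)) : equiv n p = Fin.cons p.1 p.2 := rfl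

theorem equiv_symm_apply (y : Fin (n + 1) → ℝ) : (equiv n).symm y = (y 0, Fin.tail y) := rfl

theorem equiv_le_equiv_iff (p q : ℝ × (Fin n → ℝ)) : equiv n p ≤ equiv n q ↔ p ≤ q := by
  rw [equiv_apply, equiv_apply, Fin.cons_le_cons, Prod.le_def]

theorem measurePreserving_equiv : MeasurePreserving (equiv n) := by
  convert (volume_preserving_piFinSuccAbove (fun _ : Fin (n + 1) => ℝ) 0).symm using 1
  funext p
  simp only [MeasurableEquiv.piFinSuccAbove_symm_apply, Fin.insertNthEquiv_zero]
  rfl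

theorem equiv_symm_single_zero : (equiv n).symm (Pi.single 0 1) = (1, 0) := by
  ext j
  · simp [equiv_symm_apply]
  · simp [equiv_symm_apply, Fin.tail]

theorem equiv_symm_single_succ (j : Fin n) :
    (equiv n).symm (Pi.single j.succ 1) = (0, Pi.single j 1) := by
  ext k
  · simp [equiv_symm_apply]
  · simp [equiv_symm_apply, Fin.tail, Pi.single_apply]

theorem equiv_comp_succAbove_zero (p : ℝ × (Fin n → ℝ)) : equiv n p ∘ Fin.succAbove 0 = p.2 := by
  funext j
  simp [equiv_apply]

theorem equiv_symm_insertNth_zero (c : ℝ) (x : Fin n → ℝ) :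
    (equiv n).symm (Fin.insertNth 0 c x) = (c, x) := by
  rw [ContinuousLinearEquiv.symm_apply_eq, equiv_apply, Fin.insertNth_zero']

theorem equiv_symm_insertNth_succ_snd (i : Fin n) (c : ℝ) (x : Fin n → ℝ) :
    ((equiv n).symm (Fin.insertNth i.succ c x)).2 i = c :=
  Fin.insertNth_apply_same (α := fun _ => ℝ) _ c x

theorem equiv_symm_mem_Icc_iff {p q : ℝ × (Fin n → ℝ)} {y : Fin (n + 1) → ℝ} :
    (equiv n).symm y ∈ Set.Icc p q ↔ y ∈ Set.Icc (equiv n p) (equiv n q) := by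
  rw [Set.mem_Icc, Set.mem_Icc, ← equiv_le_equiv_iff p, ← equiv_le_equiv_iff _ q,
    ContinuousLinearEquiv.apply_symm_apply]

noncomputable def divergence (F₀ : ℝ × (Fin n → ℝ) → ℝ) (F : Fin n → ℝ × (Fin n → ℝ) → ℝ)
    (p : ℝ × (Fin n → ℝ)) : ℝ :=
  fderiv ℝ F₀ p (1, 0) + ∑ i, fderiv ℝ (F i) p (0, Pi.single i 1)

theorem continuousOn_divergence {F₀ : ℝ × (Fin n → ℝ) → ℝ} {F : Fin n → ℝ × (Fin n → ℝ) → ℝ}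
    {s : Set (ℝ × (Fin n → ℝ))} (hF₀ : ∀ p ∈ s, ContDiffAt ℝ 1 F₀ p)
    (hF : ∀ i, ∀ p ∈ s, ContDiffAt ℝ 1 (F i) p) : ContinuousOn (divergence F₀ F) s := fun p hp =>
  (((hF₀ p hp).continuousAt_fderiv one_ne_zero).clm_apply continuousAt_const).add
    (tendsto_finsetSum _ fun i _ =>
      ((hF i p hp).continuousAt_fderiv one_ne_zero).clm_apply continuousAt_const)
    |>.continuousWithinAt

theorem integral_divergence_eq_sub_of_eq_zero_on_lateral {t₀ t₁ : ℝ} {a b : Fin n → ℝ}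
    (hle : (t₀, a) ≤ (t₁, b)) {F₀ : ℝ × (Fin n → ℝ) → ℝ} {F : Fin n → ℝ × (Fin n → ℝ) → ℝ}
    (hF₀ : ∀ p ∈ Set.Icc (t₀, a) (t₁, b), ContDiffAt ℝ 1 F₀ p)
    (hF : ∀ i, ∀ p ∈ Set.Icc (t₀, a) (t₁, b), ContDiffAt ℝ 1 (F i) p)
    (hlateral : ∀ p ∈ Set.Icc (t₀, a) (t₁, b), ∀ i, (p.2 i = a i ∨ p.2 i = b i) → F i p = 0) :
    ∫ p in Set.Icc (t₀, a) (t₁, b), divergence F₀ F p =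
      (∫ x in Set.Icc a b, F₀ (t₁, x)) - ∫ x in Set.Icc a b, F₀ (t₀, x) := by
  have hdiv := integral_divergence_of_hasFDerivAt_off_countable_of_equiv (equiv n)
    equiv_le_equiv_iff measurePreserving_equiv (Fin.cons F₀ F)
    (Fin.cons (fderiv ℝ F₀) fun i => fderiv ℝ (F i)) ∅ Set.countable_empty (t₀, a) (t₁, b) hle
    (Fin.cases (fun p hp => (hF₀ p hp).continuousAt.continuousWithinAt)
      fun i p hp => (hF i p hp).continuousAt.continuousWithinAt)
    (fun p hp => Fin.cases ((hF₀ p (interior_subset hp.1)).differentiableAt one_ne_zero).hasFDerivAt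
      fun i => ((hF i p (interior_subset hp.1)).differentiableAt one_ne_zero).hasFDerivAt)
    (divergence F₀ F)
    (fun p => by simp only [divergence, Fin.sum_univ_succ, Fin.cons_zero, Fin.cons_succ,
      equiv_symm_single_zero, equiv_symm_single_succ])
    ((continuousOn_divergence hF₀ hF).integrableOn_compact isCompact_Icc)
  rw [hdiv, Fin.sum_univ_succ, Finset.sum_eq_zero, add_zero]
  · simp only [Fin.cons_zero, equiv_comp_succAbove_zero, equiv_symm_insertNth_zero]
    rfl
  · intro i _
    have hface : ∀ c, (c = a i ∨ c = b i) → ∫ x in Set.Icc (equiv n (t₀, a) ∘ i.succ.succAbove)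
        (equiv n (t₁, b) ∘ i.succ.succAbove), F i ((equiv n).symm (i.succ.insertNth c x)) = 0 := by
      intro c hc
      refine setIntegral_eq_zero_of_forall_eq_zero fun x hx => hlateral _ ?_ i ?_
      · rw [equiv_symm_mem_Icc_iff, Fin.insertNth_mem_Icc]
        refine ⟨?_, hx⟩
        rcases hc with rfl | rfl
        · exact ⟨le_rfl, hle.2 i⟩
        · exact ⟨hle.2 i, le_rfl⟩
      · rwa [equiv_symm_insertNth_succ_snd]
    simp only [Fin.cons_succ]
    rw [hface (equiv n (t₁, b) i.succ) (Or.inr rfl), hface (equiv n (t₀, a) i.succ) (Or.inl rfl),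
      sub_self]

theorem divergence_uncurry {ρ : ℝ → (Fin n → ℝ) → ℝ} {m : ℝ → (Fin n → ℝ) → Fin n → ℝ}
    {t : ℝ} {x : Fin n → ℝ}
    (hρ : DifferentiableAt ℝ (fun p : ℝ × (Fin n → ℝ) => ρ p.1 p.2) (t, x))
    (hm : ∀ i, DifferentiableAt ℝ (fun p : ℝ × (Fin n → ℝ) => m p.1 p.2 i) (t, x)) :
    divergence (fun p => ρ p.1 p.2) (fun i p => m p.1 p.2 i) (t, x) =
      deriv (fun s => ρ s x) t + ∑ i, fderiv ℝ (fun y => m t y i) x (Pi.single i 1) := by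
  rw [divergence, deriv_comp_prodMk_left hρ]
  exact congrArg _ (Finset.sum_congr rfl fun i _ => (fderiv_comp_prodMk_right_apply (hm i) _).symm)

theorem divergence_mul_log_eq {P : ℝ × (Fin n → ℝ) → ℝ} {M : Fin n → ℝ × (Fin n → ℝ) → ℝ}
    {p : ℝ × (Fin n → ℝ)} (hP : DifferentiableAt ℝ P p) (hM : ∀ i, DifferentiableAt ℝ (M i) p)
    (hp : P p ≠ 0) (hPM : divergence P M p = 0) :
    divergence (fun q => P q * Real.log (P q)) (fun i q => M i q * (Real.log (P q) + 1)) p =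
      ∑ i, M i p * fderiv ℝ (fun q => Real.log (P q)) p (0, Pi.single i 1) := by
  have hP₀ : fderiv ℝ (fun q => P q * Real.log (P q)) p = (Real.log (P p) + 1) • fderiv ℝ P p :=
    ((Real.hasDerivAt_mul_log hp).comp_hasFDerivAt p hP.hasFDerivAt).fderiv
  have hM₀ : ∀ i, fderiv ℝ (fun q => M i q * (Real.log (P q) + 1)) p =
      M i p • fderiv ℝ (fun q => Real.log (P q)) p + (Real.log (P p) + 1) • fderiv ℝ (M i) p :=
    fun i => ((hM i).hasFDerivAt.mul ((hP.log hp).hasFDerivAt.add_const 1)).fderiv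
  unfold divergence at hPM ⊢
  simp only [hP₀, hM₀, add_apply, smul_apply, smul_eq_mul,
    Finset.sum_add_distrib, ← Finset.mul_sum]
  linear_combination (Real.log (P p) + 1) * hPM

theorem integral_integral_sum_mul_fderiv_log_eq {t₀ t₁ : ℝ} {a b : Fin n → ℝ}
    (hle : (t₀, a) ≤ (t₁, b)) {P : ℝ × (Fin n → ℝ) → ℝ} {M : Fin n → ℝ × (Fin n → ℝ) → ℝ}
    (hP : ∀ p ∈ Set.Icc (t₀, a) (t₁, b), ContDiffAt ℝ 1 P p)
    (hM : ∀ i, ∀ p ∈ Set.Icc (t₀, a) (t₁, b), ContDiffAt ℝ 1 (M i) p)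
    (hP₀ : ∀ p ∈ Set.Icc (t₀, a) (t₁, b), P p ≠ 0)
    (hPM : ∀ p ∈ Set.Icc (t₀, a) (t₁, b), divergence P M p = 0)
    (hlateral : ∀ p ∈ Set.Icc (t₀, a) (t₁, b), ∀ i, (p.2 i = a i ∨ p.2 i = b i) → M i p = 0) :
    ∫ t in Set.Icc t₀ t₁, ∫ x in Set.Icc a b,
        ∑ i, M i (t, x) * fderiv ℝ (fun q => Real.log (P q)) (t, x) (0, Pi.single i 1) =
      (∫ x in Set.Icc a b, P (t₁, x) * Real.log (P (t₁, x))) -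
        ∫ x in Set.Icc a b, P (t₀, x) * Real.log (P (t₀, x)) := by
  have hdiv : ∀ p ∈ Set.Icc (t₀, a) (t₁, b),
      ∑ i, M i p * fderiv ℝ (fun q => Real.log (P q)) p (0, Pi.single i 1) =
        divergence (fun q => P q * Real.log (P q)) (fun i q => M i q * (Real.log (P q) + 1)) p :=
    fun p hp => (divergence_mul_log_eq ((hP p hp).differentiableAt one_ne_zero)
      (fun i => (hM i p hp).differentiableAt one_ne_zero) (hP₀ p hp) (hPM p hp)).symm
  have hF₀ : ∀ p ∈ Set.Icc (t₀, a) (t₁, b), ContDiffAt ℝ 1 (fun q => P q * Real.log (P q)) p :=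
    fun p hp => (hP p hp).mul ((hP p hp).log (hP₀ p hp))
  have hF : ∀ i, ∀ p ∈ Set.Icc (t₀, a) (t₁, b),
      ContDiffAt ℝ 1 (fun q => M i q * (Real.log (P q) + 1)) p :=
    fun i p hp => (hM i p hp).mul (((hP p hp).log (hP₀ p hp)).add contDiffAt_const)
  have hint := ((continuousOn_divergence hF₀ hF).integrableOn_compact (μ := volume)
    isCompact_Icc).congr_fun (fun p hp => (hdiv p hp).symm) measurableSet_Icc
  rw [← setIntegral_Icc_prod hint, setIntegral_congr_fun measurableSet_Icc hdiv]
  exact integral_divergence_eq_sub_of_eq_zero_on_lateral hle hF₀ hF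
    fun p hp i hi => mul_eq_zero_of_left (hlateral p hp i hi) _

end TimeSpace

/-- Let `Ω = [a, b] ⊂ ℝⁿ` be a closed nondegenerate rectangular box. Let
`ρ : [0,1] × Ω → ℝ` be continuously differentiable and positive and
`m : [0,1] × Ω → ℝⁿ` continuously differentiable, satisfying the continuity equation
`∂_t ρ + ∇_x · m = 0` on `[0,1] × Ω` and the zero-flux boundary condition `m · ν = 0`
on `[0,1] × ∂Ω` (on the face `{x_i = a_i}` resp. `{x_i = b_i}` the outward normal is
`∓e_i`, so the condition reads `m_i = 0` there). Then
`∫₀¹ ∫_Ω m · ∇_x log ρ dx dt = ∫_Ω ρ(1,·) log ρ(1,·) dx − ∫_Ω ρ(0,·) log ρ(0,·) dx`. -/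
theorem integral_flux_dot_grad_log_eq_entropy_difference
    (n : ℕ) (a b : Fin n → ℝ) (hab : ∀ i, a i < b i)
    (ρ : ℝ → (Fin n → ℝ) → ℝ) (m : ℝ → (Fin n → ℝ) → (Fin n → ℝ))
    (hρ : ContDiff ℝ 1 (fun p : ℝ × (Fin n → ℝ) => ρ p.1 p.2))
    (hm : ContDiff ℝ 1 (fun p : ℝ × (Fin n → ℝ) => m p.1 p.2))
    (hρpos : ∀ t ∈ Set.Icc (0 : ℝ) 1, ∀ x ∈ Set.Icc a b, 0 < ρ t x)
    (hcontinuity : ∀ t ∈ Set.Icc (0 : ℝ) 1, ∀ x ∈ Set.Icc a b,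
      deriv (fun s => ρ s x) t +
        ∑ i, fderiv ℝ (fun y => m t y i) x (Pi.single i 1) = 0)
    (hflux : ∀ t ∈ Set.Icc (0 : ℝ) 1, ∀ x ∈ Set.Icc a b, ∀ i,
      (x i = a i ∨ x i = b i) → m t x i = 0) :
    ∫ t in Set.Icc (0 : ℝ) 1, ∫ x in Set.Icc a b,
        ∑ i, m t x i * fderiv ℝ (fun y => Real.log (ρ t y)) x (Pi.single i 1) =
      (∫ x in Set.Icc a b, ρ 1 x * Real.log (ρ 1 x)) -
        ∫ x in Set.Icc a b, ρ 0 x * Real.log (ρ 0 x) := by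
  set P : ℝ × (Fin n → ℝ) → ℝ := fun p => ρ p.1 p.2
  set M : Fin n → ℝ × (Fin n → ℝ) → ℝ := fun i p => m p.1 p.2 i
  have hM : ∀ i, ContDiff ℝ 1 (M i) := contDiff_pi.mp hm
  have hbox : ∀ p ∈ Set.Icc ((0 : ℝ), a) (1, b), p.1 ∈ Set.Icc (0 : ℝ) 1 ∧ p.2 ∈ Set.Icc a b :=
    fun p hp => ⟨⟨hp.1.1, hp.2.1⟩, ⟨hp.1.2, hp.2.2⟩⟩
  have hP₀ : ∀ p ∈ Set.Icc ((0 : ℝ), a) (1, b), P p ≠ 0 :=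
    fun p hp => (hρpos _ (hbox p hp).1 _ (hbox p hp).2).ne'
  have hPM : ∀ p ∈ Set.Icc ((0 : ℝ), a) (1, b), TimeSpace.divergence P M p = 0 :=
    fun p hp => (TimeSpace.divergence_uncurry (hρ.differentiable one_ne_zero p)
      fun i => (hM i).differentiable one_ne_zero p).trans
        (hcontinuity _ (hbox p hp).1 _ (hbox p hp).2)
  rw [← TimeSpace.integral_integral_sum_mul_fderiv_log_eq ⟨zero_le_one, fun i => (hab i).le⟩
    (fun p _ => hρ.contDiffAt) (fun i p _ => (hM i).contDiffAt) hP₀ hPM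
    fun p hp i hi => hflux _ (hbox p hp).1 _ (hbox p hp).2 i hi]
  refine setIntegral_congr_fun measurableSet_Icc fun t ht => ?_
  refine setIntegral_congr_fun measurableSet_Icc fun x hx => ?_
  exact Finset.sum_congr rfl fun i _ => congrArg (m t x i * ·) (fderiv_comp_prodMk_right_apply
    ((hρ.differentiable one_ne_zero _).log (hP₀ (t, x) ⟨⟨ht.1, hx.1⟩, ht.2, hx.2⟩)) _)
end
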